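/- Let n ≥ 2 and let U_{n−1} act on the space F^{(n−1)×1} of column vectors of length n−1 over F by D^A = A⁻¹D for A ∈ U_{n−1}. For every nonzero f ∈ F and every 1 ≤ i ≤ n−1, the orbit of the vector f·E_{i,1} (the vector with entry f in position i and 0 elsewhere) under this action has size q^{i−1}, and the stabilizer of f·E_{i,1} in U_{n−1} is exactly P_{n−1,i}. -/

import Mathlib

open Matrix

/-- A square matrix is (upper) unitriangular if all entries below the diagonal vanish
and all diagonal entries equal `1`. -/
def IsUnitriangular {n : ℕ} {F : Type*} [Field F] (A : Matrix (Fin n) (Fin n) F) : Prop :=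
  (∀ i j : Fin n, j < i → A i j = 0) ∧ ∀ i : Fin n, A i i = 1

theorem IsUnitriangular.mul {n : ℕ} {F : Type*} [Field F]
    {A B : Matrix (Fin n) (Fin n) F}
    (hA : IsUnitriangular A) (hB : IsUnitriangular B) : IsUnitriangular (A * B) := by
  constructor
  · intro i j hij
    rw [Matrix.mul_apply]
    apply Finset.sum_eq_zero
    intro m _
    rcases lt_or_ge m i with h | h
    · rw [hA.1 i m h, zero_mul]
    · rw [hB.1 m j (lt_of_lt_of_le hij h), mul_zero]
  · intro i
    rw [Matrix.mul_apply, Finset.sum_eq_single i]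
    · rw [hA.2, hB.2, one_mul]
    · intro m _ hm
      rcases lt_or_gt_of_ne hm with h | h
      · rw [hA.1 i m h, zero_mul]
      · rw [hB.1 m i h, mul_zero]
    · intro h
      exact absurd (Finset.mem_univ i) h

theorem IsUnitriangular.inv {n : ℕ} {F : Type*} [Field F] {A : GL (Fin n) F}
    (hA : IsUnitriangular (A : Matrix (Fin n) (Fin n) F)) :
    IsUnitriangular ((A⁻¹ : GL (Fin n) F) : Matrix (Fin n) (Fin n) F) := by
  letI := A.invertible
  have hBT : Matrix.BlockTriangular (A : Matrix (Fin n) (Fin n) F) id := fun i j h => hA.1 i j h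
  have hBTinv : Matrix.BlockTriangular ((A : Matrix (Fin n) (Fin n) F)⁻¹) id :=
    Matrix.blockTriangular_inv_of_blockTriangular hBT
  have hcoe : ((A⁻¹ : GL (Fin n) F) : Matrix (Fin n) (Fin n) F)
      = ((A : Matrix (Fin n) (Fin n) F)⁻¹) := Matrix.coe_units_inv A
  constructor
  · intro i j hij
    rw [hcoe]
    exact hBTinv hij
  · intro i
    have hmul : (A : Matrix (Fin n) (Fin n) F) * ((A⁻¹ : GL (Fin n) F) : Matrix (Fin n) (Fin n) F)
        = 1 := by
      rw [← Units.val_mul, mul_inv_cancel, Units.val_one]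
    have h1 : ((A : Matrix (Fin n) (Fin n) F)
        * ((A⁻¹ : GL (Fin n) F) : Matrix (Fin n) (Fin n) F)) i i = 1 := by
      rw [hmul, Matrix.one_apply_eq]
    rw [Matrix.mul_apply, Finset.sum_eq_single i] at h1
    · rw [hA.2 i, one_mul] at h1
      exact h1
    · intro m _ hm
      rcases lt_or_gt_of_ne hm with h | h
      · rw [hA.1 i m h, zero_mul]
      · rw [hcoe, hBTinv h, mul_zero]
    · intro h
      exact absurd (Finset.mem_univ i) h

/-- `UT F n` is the subgroup of `GL (Fin n) F` of upper unitriangular matrices,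
i.e. the group `U_n` of the paper. -/
def UT (F : Type*) [Field F] (n : ℕ) : Subgroup (GL (Fin n) F) where
  carrier := {A | IsUnitriangular (A : Matrix (Fin n) (Fin n) F)}
  one_mem' := by
    constructor
    · intro i j hij
      show (1 : GL (Fin n) F).val i j = 0
      rw [Units.val_one]
      exact Matrix.one_apply_ne hij.ne'
    · intro i
      show (1 : GL (Fin n) F).val i i = 1
      rw [Units.val_one]
      exact Matrix.one_apply_eq i
  mul_mem' := by
    intro A B hA hB
    show IsUnitriangular ((A * B : GL (Fin n) F) : Matrix (Fin n) (Fin n) F)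
    rw [Units.val_mul]
    exact IsUnitriangular.mul hA hB
  inv_mem' := by
    intro A hA
    exact IsUnitriangular.inv hA

/-- The full triviality of a column: combined with unitriangularity, vanishing above the
diagonal in a column means the column is a standard basis vector. -/
theorem trivial_col {n : ℕ} {F : Type*} [Field F] {A : Matrix (Fin n) (Fin n) F}
    (h1 : IsUnitriangular A) {c : Fin n}
    (h2 : ∀ k : Fin n, k < c → A k c = 0) {m : Fin n} (hm : m ≠ c) : A m c = 0 := by
  rcases lt_or_gt_of_ne hm with h | h
  · exact h2 m h
  · exact h1.1 m c h

/-- `Pcol F n i` is the subgroup `P_{n,i}` of `U_n` (inside `GL (Fin n) F`): unitriangular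
matrices whose `i`-th column (`1`-based) is trivial. -/
def Pcol (F : Type*) [Field F] (n : ℕ) (i : ℕ) : Subgroup (GL (Fin n) F) where
  carrier := {A | IsUnitriangular (A : Matrix (Fin n) (Fin n) F) ∧
    ∀ k c : Fin n, (c : ℕ) + 1 = i → k < c → (A : Matrix (Fin n) (Fin n) F) k c = 0}
  one_mem' := by
    refine ⟨(UT F n).one_mem, ?_⟩
    intro k c _ hk
    show (1 : GL (Fin n) F).val k c = 0
    rw [Units.val_one]
    exact Matrix.one_apply_ne hk.ne
  mul_mem' := by
    rintro A B ⟨hA1, hA2⟩ ⟨hB1, hB2⟩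
    refine ⟨(UT F n).mul_mem hA1 hB1, ?_⟩
    intro k c hc hk
    show ((A * B : GL (Fin n) F) : Matrix (Fin n) (Fin n) F) k c = 0
    rw [Units.val_mul, Matrix.mul_apply, Finset.sum_eq_single c]
    · rw [hA2 k c hc hk, zero_mul]
    · intro m _ hm
      rw [trivial_col hB1 (fun k' hk' => hB2 k' c hc hk') hm, mul_zero]
    · intro h
      exact absurd (Finset.mem_univ c) h
  inv_mem' := by
    rintro A ⟨hA1, hA2⟩
    refine ⟨IsUnitriangular.inv hA1, ?_⟩
    intro k c hc hk
    have hBA : ((A⁻¹ : GL (Fin n) F) : Matrix (Fin n) (Fin n) F)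
        * (A : Matrix (Fin n) (Fin n) F) = 1 := by
      rw [← Units.val_mul, inv_mul_cancel, Units.val_one]
    have h0 : (((A⁻¹ : GL (Fin n) F) : Matrix (Fin n) (Fin n) F)
        * (A : Matrix (Fin n) (Fin n) F)) k c = 0 := by
      rw [hBA]
      exact Matrix.one_apply_ne hk.ne
    rw [Matrix.mul_apply, Finset.sum_eq_single c] at h0
    · rw [hA1.2 c, mul_one] at h0
      exact h0
    · intro m _ hm
      rw [trivial_col hA1 (fun k' hk' => hA2 k' c hc hk') hm, mul_zero]
    · intro h
      exact absurd (Finset.mem_univ c) h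

/-- `Qcol F n i j` is the subgroup `Q_{n,i,j}` of `U_n` (inside `GL (Fin n) F`), for `1`-based
indices `i < j`: unitriangular matrices `A` with `A_{y,i} = 0` for `y < i` and `A_{x,j} = 0`
for `x < j`, `x ≠ i`. -/
def Qcol (F : Type*) [Field F] (n : ℕ) (i j : ℕ) : Subgroup (GL (Fin n) F) where
  carrier := {A | IsUnitriangular (A : Matrix (Fin n) (Fin n) F) ∧
    (∀ y c : Fin n, (c : ℕ) + 1 = i → (y : ℕ) + 1 < i →
      (A : Matrix (Fin n) (Fin n) F) y c = 0) ∧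
    (∀ x c : Fin n, (c : ℕ) + 1 = j → (x : ℕ) + 1 < j → (x : ℕ) + 1 ≠ i →
      (A : Matrix (Fin n) (Fin n) F) x c = 0)}
  one_mem' := by
    refine ⟨(UT F n).one_mem, ?_, ?_⟩
    · intro y c hc hy
      show (1 : GL (Fin n) F).val y c = 0
      rw [Units.val_one]
      refine Matrix.one_apply_ne fun h => ?_
      rw [h] at hy
      omega
    · intro x c hc hx _
      show (1 : GL (Fin n) F).val x c = 0
      rw [Units.val_one]
      refine Matrix.one_apply_ne fun h => ?_
      rw [h] at hx
      omega
  mul_mem' := by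
    rintro A B ⟨hA1, hA2, hA3⟩ ⟨hB1, hB2, hB3⟩
    have colI : ∀ (M : Matrix (Fin n) (Fin n) F), IsUnitriangular M →
        (∀ y c : Fin n, (c : ℕ) + 1 = i → (y : ℕ) + 1 < i → M y c = 0) →
        ∀ y c : Fin n, (c : ℕ) + 1 = i → y ≠ c → M y c = 0 := by
      intro M hM1 hM2 y c hc hy
      rcases lt_or_gt_of_ne hy with h | h
      · have h' : (y : ℕ) < (c : ℕ) := h
        exact hM2 y c hc (by omega)
      · exact hM1.1 y c h
    have colJ : ∀ (M : Matrix (Fin n) (Fin n) F), IsUnitriangular M →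
        (∀ x c : Fin n, (c : ℕ) + 1 = j → (x : ℕ) + 1 < j → (x : ℕ) + 1 ≠ i → M x c = 0) →
        ∀ x c : Fin n, (c : ℕ) + 1 = j → x ≠ c → (x : ℕ) + 1 ≠ i → M x c = 0 := by
      intro M hM1 hM3 x c hc hx hxi
      rcases lt_or_gt_of_ne hx with h | h
      · have h' : (x : ℕ) < (c : ℕ) := h
        exact hM3 x c hc (by omega) hxi
      · exact hM1.1 x c h
    refine ⟨(UT F n).mul_mem hA1 hB1, ?_, ?_⟩
    · intro y c hc hy
      show ((A * B : GL (Fin n) F) : Matrix (Fin n) (Fin n) F) y c = 0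
      rw [Units.val_mul, Matrix.mul_apply, Finset.sum_eq_single c]
      · rw [hA2 y c hc hy, zero_mul]
      · intro m _ hm
        rw [colI _ hB1 hB2 m c hc hm, mul_zero]
      · intro h
        exact absurd (Finset.mem_univ c) h
    · intro x c hc hx hxi
      show ((A * B : GL (Fin n) F) : Matrix (Fin n) (Fin n) F) x c = 0
      rw [Units.val_mul, Matrix.mul_apply]
      apply Finset.sum_eq_zero
      intro m _
      by_cases hmi : (m : ℕ) + 1 = i
      · have hxm : x ≠ m := fun h => hxi (by rw [h]; exact hmi)
        rw [colI _ hA1 hA2 x m hmi hxm, zero_mul]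
      · by_cases hmc : m = c
        · subst hmc
          rw [hA3 x m hc hx hxi, zero_mul]
        · rw [colJ _ hB1 hB3 m c hc hmc hmi, mul_zero]
  inv_mem' := by
    rintro A ⟨hA1, hA2, hA3⟩
    have colI : ∀ y c : Fin n, (c : ℕ) + 1 = i → y ≠ c →
        (A : Matrix (Fin n) (Fin n) F) y c = 0 := by
      intro y c hc hy
      rcases lt_or_gt_of_ne hy with h | h
      · have h' : (y : ℕ) < (c : ℕ) := h
        exact hA2 y c hc (by omega)
      · exact hA1.1 y c h
    have colJ : ∀ x c : Fin n, (c : ℕ) + 1 = j → x ≠ c → (x : ℕ) + 1 ≠ i →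
        (A : Matrix (Fin n) (Fin n) F) x c = 0 := by
      intro x c hc hx hxi
      rcases lt_or_gt_of_ne hx with h | h
      · have h' : (x : ℕ) < (c : ℕ) := h
        exact hA3 x c hc (by omega) hxi
      · exact hA1.1 x c h
    have hBA : ((A⁻¹ : GL (Fin n) F) : Matrix (Fin n) (Fin n) F)
        * (A : Matrix (Fin n) (Fin n) F) = 1 := by
      rw [← Units.val_mul, inv_mul_cancel, Units.val_one]
    have hBcolI : ∀ y c : Fin n, (c : ℕ) + 1 = i → y ≠ c →
        ((A⁻¹ : GL (Fin n) F) : Matrix (Fin n) (Fin n) F) y c = 0 := by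
      intro y c hc hy
      have h0 : (((A⁻¹ : GL (Fin n) F) : Matrix (Fin n) (Fin n) F)
          * (A : Matrix (Fin n) (Fin n) F)) y c = 0 := by
        rw [hBA]
        exact Matrix.one_apply_ne hy
      rw [Matrix.mul_apply, Finset.sum_eq_single c] at h0
      · rw [hA1.2 c, mul_one] at h0
        exact h0
      · intro m _ hm
        rw [colI m c hc hm, mul_zero]
      · intro h
        exact absurd (Finset.mem_univ c) h
    refine ⟨IsUnitriangular.inv hA1, ?_, ?_⟩
    · intro y c hc hy
      refine hBcolI y c hc fun h => ?_
      rw [h] at hy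
      omega
    · intro x c hc hx hxi
      have hxc : x ≠ c := fun h => by rw [h] at hx; omega
      have h0 : (((A⁻¹ : GL (Fin n) F) : Matrix (Fin n) (Fin n) F)
          * (A : Matrix (Fin n) (Fin n) F)) x c = 0 := by
        rw [hBA]
        exact Matrix.one_apply_ne hxc
      rw [Matrix.mul_apply, Finset.sum_eq_single c] at h0
      · rw [hA1.2 c, mul_one] at h0
        exact h0
      · intro m _ hm
        by_cases hmi : (m : ℕ) + 1 = i
        · have hxm : x ≠ m := fun h => hxi (by rw [h]; exact hmi)
          rw [hBcolI x m hmi hxm, zero_mul]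
        · rw [colJ m c hc hm hmi, mul_zero]
      · intro h
        exact absurd (Finset.mem_univ c) h

/-- `f : G → ℂ` is an irreducible (complex) character of `G` if it is the character of some
irreducible (= simple) finite-dimensional complex representation of `G`. -/
def IsIrrChar {G : Type} [Group G] (f : G → ℂ) : Prop :=
  ∃ V : FDRep ℂ G, CategoryTheory.Simple V ∧ f = fun g => FDRep.character V g

/-- `Nk G k` is the number `N_k(G)` of irreducible complex characters of `G` of degree `k`
(recall that the degree of a character `χ` is `χ(1)`). -/
noncomputable def Nk (G : Type) [Group G] (k : ℕ) : ℕ :=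
  Set.ncard {f : G → ℂ | IsIrrChar f ∧ f 1 = (k : ℂ)}

/-- A matrix is quasimonomial if it has at most one nonzero entry in every row and in
every column. -/
def Quasimonomial {s t : ℕ} {F : Type*} [Field F] (T : Matrix (Fin s) (Fin t) F) : Prop :=
  (∀ (i : Fin s) (j j' : Fin t), T i j ≠ 0 → T i j' ≠ 0 → j = j') ∧
  (∀ (i i' : Fin s) (j : Fin t), T i j ≠ 0 → T i' j ≠ 0 → i = i')


/-! `B (f eᵢ) = f · (column i of B)`, and the `i`-th columns of unitriangular matrices are exactly
the vectors `v` with `vᵢ = 1` and `v_k = 0` for `k > i` (`v` is the `i`-th column of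
`updateCol 1 i v`). So the orbit of `f eᵢ` is `{w | wᵢ = f, w_k = 0 for k > i}`, whose entries
above position `i` are free, and `A` fixes `f eᵢ` exactly when its `i`-th column is `eᵢ`. -/

theorem GeneralLinearGroup.inv_mulVec_eq_self_iff {n R : Type*} [Fintype n] [DecidableEq n]
    [CommRing R] (A : GL n R) (v : n → R) :
    ((A⁻¹ : GL n R) : Matrix n n R) *ᵥ v = v ↔ (A : Matrix n n R) *ᵥ v = v := by
  constructor <;> intro h <;> conv_lhs => rw [← h, mulVec_mulVec]
  all_goals simp

section Unitriangular

variable {F : Type*} [Field F] {m : ℕ}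

theorem IsUnitriangular.det_eq_one {A : Matrix (Fin m) (Fin m) F} (hA : IsUnitriangular A) :
    A.det = 1 := by
  rw [det_of_isUpperTriangular fun i j h => hA.1 i j h]
  simp [hA.2]

noncomputable def UT.mk (A : Matrix (Fin m) (Fin m) F) (hA : IsUnitriangular A) : UT F m :=
  ⟨GeneralLinearGroup.mkOfDetNeZero A (by simp [hA.det_eq_one]), hA⟩

@[simp]
theorem UT.coe_mk (A : Matrix (Fin m) (Fin m) F) (hA : IsUnitriangular A) :
    ((UT.mk A hA : GL (Fin m) F) : Matrix (Fin m) (Fin m) F) = A :=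
  rfl

theorem isUnitriangular_updateCol_one {i : Fin m} {v : Fin m → F} (hi : v i = 1)
    (hv : ∀ k, i < k → v k = 0) : IsUnitriangular (updateCol 1 i v) := by
  refine ⟨fun k l hlk => ?_, fun k => ?_⟩
  · rw [updateCol_apply]
    split_ifs with hl
    · exact hv k (hl ▸ hlk)
    · exact one_apply_ne hlk.ne'
  · rw [updateCol_apply]
    split_ifs with hk
    · rwa [hk]
    · exact one_apply_eq k

theorem exists_UT_mulVec_single_eq_iff {i : Fin m} {f : F} (hf : f ≠ 0) {w : Fin m → F} :
    (∃ A : UT F m, w = ((A : GL (Fin m) F) : Matrix (Fin m) (Fin m) F) *ᵥ Pi.single i f) ↔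
      w i = f ∧ ∀ k, i < k → w k = 0 := by
  constructor
  · rintro ⟨A, rfl⟩
    have hA : IsUnitriangular ((A : GL (Fin m) F) : Matrix (Fin m) (Fin m) F) := A.2
    exact ⟨by simp [hA.2], fun k hk => by simp [hA.1 k i hk]⟩
  · rintro ⟨hi, hlt⟩
    have hU : IsUnitriangular (updateCol 1 i (f⁻¹ • w)) :=
      isUnitriangular_updateCol_one (by simp [hi, hf]) fun k hk => by simp [hlt k hk]
    refine ⟨UT.mk _ hU, funext fun k => ?_⟩
    simp only [UT.coe_mk, mulVec_single, Pi.smul_apply, col_apply, updateCol_self,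
      op_smul_eq_mul, smul_eq_mul]
    field_simp

theorem IsUnitriangular.mulVec_single_eq_self_iff {A : Matrix (Fin m) (Fin m) F}
    (hA : IsUnitriangular A) {f : F} (hf : f ≠ 0) (i : Fin m) :
    A *ᵥ Pi.single i f = Pi.single i f ↔ ∀ k, k < i → A k i = 0 := by
  refine funext_iff.trans (forall_congr' fun k => ?_)
  rcases lt_trichotomy k i with h | rfl | h
  · simp [h, h.ne, hf]
  · simp [hA.2]
  · simp [hA.1 k i h, h.ne', not_lt_of_gt h]

theorem mem_Pcol_succ_iff {A : GL (Fin m) F} {i : Fin m} :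
    A ∈ Pcol F m (i + 1) ↔
      IsUnitriangular (A : Matrix (Fin m) (Fin m) F) ∧ ∀ k, k < i → (A : Matrix (Fin m) (Fin m) F) k i = 0 := by
  refine and_congr_right fun _ => ⟨fun h k hk => h k i rfl hk, fun h k c hc hk => ?_⟩
  obtain rfl : c = i := Fin.ext (by omega)
  exact h k hk

theorem ncard_setOf_apply_eq_and_apply_eq_zero_of_lt [Fintype F] (i : Fin m) (f : F) :
    {w : Fin m → F | w i = f ∧ ∀ k, i < k → w k = 0}.ncard = Fintype.card F ^ (i : ℕ) := by
  classical
  let t : (k : Fin m) → Finset F := fun k => if k < i then Finset.univ else {if k = i then f else 0}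
  have : {w : Fin m → F | w i = f ∧ ∀ k, i < k → w k = 0} = Fintype.piFinset t := by
    ext w
    simp only [Set.mem_ofPred_eq, Finset.mem_coe, Fintype.mem_piFinset, t]
    constructor
    · rintro ⟨hi, hlt⟩ k
      rcases lt_trichotomy k i with h | rfl | h
      · simp [h]
      · simp [hi]
      · simp [not_lt_of_gt h, h.ne', hlt k h]
    · intro h
      exact ⟨by simpa using h i, fun k hk => by simpa [not_lt_of_gt hk, hk.ne'] using h k⟩
  rw [this, Set.ncard_coe_finset, Fintype.card_piFinset]
  simp [t, apply_ite Finset.card, Finset.prod_ite, Finset.filter_gt_eq_Iio]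

end Unitriangular

theorem stmt_19_general (q : ℕ)
    (F : Type) [Field F] [Fintype F] (hF : Fintype.card F = q)
    (n : ℕ) (f : F) (hf : f ≠ 0) (i : Fin (n - 1)) :
    Set.ncard {w : Fin (n - 1) → F | ∃ A : UT F (n - 1),
        w = Matrix.mulVec
          (((A⁻¹ : UT F (n - 1)) : GL (Fin (n - 1)) F) : Matrix (Fin (n - 1)) (Fin (n - 1)) F)
          (fun l => if l = i then f else 0)} = q ^ (i : ℕ) ∧
    ∀ A : UT F (n - 1),
      (Matrix.mulVec
          (((A⁻¹ : UT F (n - 1)) : GL (Fin (n - 1)) F) : Matrix (Fin (n - 1)) (Fin (n - 1)) F)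
          (fun l => if l = i then f else 0) = (fun l => if l = i then f else 0)
        ↔ (A : GL (Fin (n - 1)) F) ∈ Pcol F (n - 1) ((i : ℕ) + 1)) := by
  have hsingle : (fun l => if l = i then f else 0) = Pi.single i f :=
    funext fun l => (Pi.single_apply i f l).symm
  rw [hsingle]
  refine ⟨?_, fun A => ?_⟩
  · have horbit : {w : Fin (n - 1) → F | ∃ A : UT F (n - 1),
          w = (((A⁻¹ : UT F (n - 1)) : GL (Fin (n - 1)) F) : Matrix (Fin (n - 1)) (Fin (n - 1)) F) *ᵥ Pi.single i f} =
        {w | w i = f ∧ ∀ k, i < k → w k = 0} := by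
      ext w
      exact inv_surjective.exists.symm.trans (exists_UT_mulVec_single_eq_iff hf)
    rw [horbit, ncard_setOf_apply_eq_and_apply_eq_zero_of_lt, hF]
  · have hA : IsUnitriangular ((A : GL (Fin (n - 1)) F) : Matrix (Fin (n - 1)) (Fin (n - 1)) F) := A.2
    rw [Subgroup.coe_inv, GeneralLinearGroup.inv_mulVec_eq_self_iff,
      hA.mulVec_single_eq_self_iff hf, mem_Pcol_succ_iff, and_iff_right hA]

theorem stmt_19 (p q : ℕ) (hp : p.Prime) (hpq : ∃ m : ℕ, 0 < m ∧ q = p ^ m)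
    (F : Type) [Field F] [Fintype F] (hF : Fintype.card F = q)
    (n : ℕ) (hn : 2 ≤ n) (f : F) (hf : f ≠ 0) (i : Fin (n - 1)) :
    Set.ncard {w : Fin (n - 1) → F | ∃ A : UT F (n - 1),
        w = Matrix.mulVec
          (((A⁻¹ : UT F (n - 1)) : GL (Fin (n - 1)) F) : Matrix (Fin (n - 1)) (Fin (n - 1)) F)
          (fun l => if l = i then f else 0)} = q ^ (i : ℕ) ∧
    ∀ A : UT F (n - 1),
      (Matrix.mulVec
          (((A⁻¹ : UT F (n - 1)) : GL (Fin (n - 1)) F) : Matrix (Fin (n - 1)) (Fin (n - 1)) F)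
          (fun l => if l = i then f else 0) = (fun l => if l = i then f else 0)
        ↔ (A : GL (Fin (n - 1)) F) ∈ Pcol F (n - 1) ((i : ℕ) + 1)) :=
  stmt_19_general q F hF n f hf i
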